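/- arXiv:1903.08244 — 3 statements merged into one kernel-verified Lean document; each statement's English description precedes it below -/
import Mathlib

section
/- One has 𝒴*(0) = 3π/8, i.e. the improper integral ∫₀^∞ db / (1 + 3Ψ₁(−p*·b²)²) converges and equals 3π/8. -/
/-!
Cardano's formula shows that `Ψ₁` inverts `t ↦ -(t³ + t)`. After scaling out `p*`, the
substitution `b = √(ψ³ + ψ)` turns `db / (1 + 3Ψ₁(-b²)²)` into `dψ / (2√(ψ³ + ψ))`, and
`x = ψ² / (1 + ψ²)` turns `∫₀^∞ dψ / √(ψ³ + ψ)` into the beta integral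
`B(1/4, 1/4) = Γ(1/4)² / √π`. The constant `p*` is exactly the one for which
`Γ(1/4)² / (4√(p* π)) = 3π/8`.
-/

noncomputable section

open Real MeasureTheory

/-- The real cube root. -/
def cbrt (x : ℝ) : ℝ := Real.sign x * |x| ^ ((1 : ℝ) / 3)

/-- The profile `Ψ₁`, inverse of `X ↦ -X - X³`. -/
def Psi1 (X : ℝ) : ℝ :=
  cbrt (-X / 2 + Real.sqrt (1 / 27 + X ^ 2 / 4)) +
    cbrt (-X / 2 - Real.sqrt (1 / 27 + X ^ 2 / 4))

/-- The normalising constant `p* = (4/(9π³))·Γ(1/4)⁴`. -/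
def pStar : ℝ := (4 / (9 * π ^ 3)) * Real.Gamma (1 / 4) ^ 4

/-- The displacement curve `𝒴*(X) = ∫₀^∞ db / (1 + 3Ψ₁(p*(X - b²))²)`. -/
def Ystar (X : ℝ) : ℝ :=
  ∫ b in Set.Ioi (0 : ℝ), 1 / (1 + 3 * (Psi1 (pStar * (X - b ^ 2))) ^ 2)

open Set

theorem cbrt_pow_three (x : ℝ) : cbrt x ^ 3 = x := by
  have hroot : (|x| ^ ((1 : ℝ) / 3)) ^ 3 = |x| := by
    rw [← Real.rpow_natCast, ← Real.rpow_mul (abs_nonneg x)]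
    norm_num
  rcases lt_trichotomy x 0 with hx | rfl | hx
  · rw [cbrt, mul_pow, hroot, Real.sign_of_neg hx, abs_of_neg hx]; ring
  · simp [cbrt]
  · rw [cbrt, mul_pow, hroot, Real.sign_of_pos hx, abs_of_pos hx]; ring

theorem strictMono_pow_three_add_self : StrictMono fun t : ℝ => t ^ 3 + t :=
  (Odd.strictMono_pow (by decide)).add strictMono_id

theorem Psi1_pow_three_add_self (X : ℝ) : Psi1 X ^ 3 + Psi1 X = -X := by
  unfold Psi1
  set r := √(1 / 27 + X ^ 2 / 4)
  have hr : r ^ 2 = 1 / 27 + X ^ 2 / 4 := Real.sq_sqrt (by positivity)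
  set u := cbrt (-X / 2 + r)
  set v := cbrt (-X / 2 - r)
  have hu : u ^ 3 = -X / 2 + r := cbrt_pow_three _
  have hv : v ^ 3 = -X / 2 - r := cbrt_pow_three _
  have huv : u * v = -1 / 3 := by
    refine (Odd.strictMono_pow (R := ℝ) (n := 3) (by decide)).injective ?_
    simp only [mul_pow, hu, hv]
    linear_combination -hr
  linear_combination hu + hv + 3 * (u + v) * huv

theorem Psi1_neg_pow_three_add_self (t : ℝ) : Psi1 (-(t ^ 3 + t)) = t :=
  strictMono_pow_three_add_self.injective <| by
    simp only [Psi1_pow_three_add_self, neg_neg]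

theorem ofReal_rpow_mul_one_sub_rpow {a b x : ℝ} (hx : x ∈ Icc (0 : ℝ) 1) :
    ((x ^ (a - 1) * (1 - x) ^ (b - 1) : ℝ) : ℂ) =
      (x : ℂ) ^ ((a : ℂ) - 1) * (1 - (x : ℂ)) ^ ((b : ℂ) - 1) := by
  rw [Complex.ofReal_mul, Complex.ofReal_cpow hx.1, Complex.ofReal_cpow (sub_nonneg.2 hx.2)]
  push_cast
  rfl

theorem integrableOn_rpow_mul_one_sub_rpow {a b : ℝ} (ha : 0 < a) (hb : 0 < b) :
    IntegrableOn (fun x : ℝ => x ^ (a - 1) * (1 - x) ^ (b - 1)) (Ioo 0 1) := by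
  have hc := (intervalIntegrable_iff_integrableOn_Ioo_of_le zero_le_one).1 <|
    Complex.betaIntegral_convergent (u := a) (v := b) (by simpa) (by simpa)
  refine IntegrableOn.congr_fun hc.re (fun x hx => ?_) measurableSet_Ioo
  simp only [← ofReal_rpow_mul_one_sub_rpow (Ioo_subset_Icc_self hx), RCLike.re_to_complex,
    Complex.ofReal_re]

theorem integral_rpow_mul_one_sub_rpow {a b : ℝ} (ha : 0 < a) (hb : 0 < b) :
    ∫ x in Ioo (0 : ℝ) 1, x ^ (a - 1) * (1 - x) ^ (b - 1) =
      Real.Gamma a * Real.Gamma b / Real.Gamma (a + b) := by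
  have h := Complex.betaIntegral_eq_Gamma_mul_div a b (by simpa) (by simpa)
  rw [Complex.betaIntegral, intervalIntegral.integral_of_le zero_le_one,
    integral_Ioc_eq_integral_Ioo, ← setIntegral_congr_fun measurableSet_Ioo
      fun x hx => ofReal_rpow_mul_one_sub_rpow (a := a) (b := b) (Ioo_subset_Icc_self hx),
    integral_complex_ofReal, ← Complex.ofReal_add, Complex.Gamma_ofReal, Complex.Gamma_ofReal,
    Complex.Gamma_ofReal] at h
  exact_mod_cast h

theorem abs_mul_rpow_mul_one_sub_rpow_sq_div_one_add_sq {a b t : ℝ} (ht : 0 < t) :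
    |2 * t / (1 + t ^ 2) ^ 2| *
        ((t ^ 2 / (1 + t ^ 2)) ^ (a - 1) * (1 - t ^ 2 / (1 + t ^ 2)) ^ (b - 1)) =
      2 * (t ^ (2 * a - 1) * (1 + t ^ 2) ^ (-(a + b))) := by
  have hu : 0 < 1 + t ^ 2 := by positivity
  have hsub : 1 - t ^ 2 / (1 + t ^ 2) = (1 + t ^ 2)⁻¹ := by field_simp; ring
  have hpow_t : t ^ (2 * a - 1) = (t ^ 2) ^ (a - 1) * t := by
    rw [← Real.rpow_natCast_mul ht.le, ← Real.rpow_add_one ht.ne']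
    push_cast; ring_nf
  have hpow_u : (1 + t ^ 2) ^ (-(a + b)) =
      ((1 + t ^ 2) ^ (a - 1))⁻¹ * ((1 + t ^ 2) ^ (b - 1))⁻¹ / (1 + t ^ 2) ^ 2 := by
    rw [show -(a + b) = (-(a - 1) + -(b - 1)) - (2 : ℕ) by push_cast; ring,
      Real.rpow_sub_natCast hu.ne', Real.rpow_add hu, Real.rpow_neg hu.le, Real.rpow_neg hu.le]
  rw [abs_of_pos (by positivity), hsub, Real.div_rpow (by positivity) hu.le,
    Real.inv_rpow hu.le, hpow_t, hpow_u]
  have : 0 < (t ^ 2) ^ (a - 1) := by positivity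
  have : 0 < (1 + t ^ 2) ^ (a - 1) := by positivity
  have : 0 < (1 + t ^ 2) ^ (b - 1) := by positivity
  field_simp

theorem hasDerivAt_sq_div_one_add_sq (t : ℝ) :
    HasDerivAt (fun t : ℝ => t ^ 2 / (1 + t ^ 2)) (2 * t / (1 + t ^ 2) ^ 2) t := by
  refine ((hasDerivAt_pow 2 t).fun_div ((hasDerivAt_pow 2 t).const_add 1)
    (by positivity)).congr_deriv ?_
  ring

theorem injOn_sq_div_one_add_sq : InjOn (fun t : ℝ => t ^ 2 / (1 + t ^ 2)) (Ioi 0) := by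
  intro s hs t ht hst
  have hu : 0 < 1 + s ^ 2 := by positivity
  have hv : 0 < 1 + t ^ 2 := by positivity
  rw [div_eq_div_iff hu.ne' hv.ne'] at hst
  exact (sq_eq_sq₀ (le_of_lt hs) (le_of_lt ht)).1 (by linarith)

theorem image_sq_div_one_add_sq_Ioi :
    (fun t : ℝ => t ^ 2 / (1 + t ^ 2)) '' Ioi 0 = Ioo 0 1 := by
  ext x
  constructor
  · rintro ⟨t, ht : 0 < t, rfl⟩
    exact ⟨by positivity, (div_lt_one (by positivity)).2 (by linarith)⟩
  · rintro ⟨hx0, hx1⟩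
    have h1x : 0 < 1 - x := sub_pos.2 hx1
    refine ⟨√(x / (1 - x)), Real.sqrt_pos.2 (by positivity), ?_⟩
    simp only [Real.sq_sqrt (by positivity : 0 ≤ x / (1 - x))]
    field_simp
    ring

theorem integrableOn_rpow_mul_one_add_sq_rpow {a b : ℝ} (ha : 0 < a) (hb : 0 < b) :
    IntegrableOn (fun t : ℝ => t ^ (2 * a - 1) * (1 + t ^ 2) ^ (-(a + b))) (Ioi 0) := by
  have h := integrableOn_rpow_mul_one_sub_rpow ha hb
  rw [← image_sq_div_one_add_sq_Ioi, integrableOn_image_iff_integrableOn_abs_deriv_smul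
    measurableSet_Ioi (fun t _ => (hasDerivAt_sq_div_one_add_sq t).hasDerivWithinAt)
    injOn_sq_div_one_add_sq] at h
  refine IntegrableOn.congr_fun (h.const_mul 2⁻¹) (fun t ht => ?_) measurableSet_Ioi
  rw [smul_eq_mul, abs_mul_rpow_mul_one_sub_rpow_sq_div_one_add_sq ht,
    inv_mul_cancel_left₀ two_ne_zero]

theorem integral_rpow_mul_one_add_sq_rpow {a b : ℝ} (ha : 0 < a) (hb : 0 < b) :
    ∫ t in Ioi (0 : ℝ), t ^ (2 * a - 1) * (1 + t ^ 2) ^ (-(a + b)) =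
      Real.Gamma a * Real.Gamma b / (2 * Real.Gamma (a + b)) := by
  have h := integral_rpow_mul_one_sub_rpow ha hb
  rw [← image_sq_div_one_add_sq_Ioi, integral_image_eq_integral_abs_deriv_smul
    measurableSet_Ioi (fun t _ => (hasDerivAt_sq_div_one_add_sq t).hasDerivWithinAt)
    injOn_sq_div_one_add_sq] at h
  simp only [smul_eq_mul] at h
  rw [setIntegral_congr_fun measurableSet_Ioi
    fun t ht => abs_mul_rpow_mul_one_sub_rpow_sq_div_one_add_sq ht, integral_const_mul] at h
  rw [div_mul_eq_div_div_swap, ← h]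
  ring

theorem integrableOn_Ioi_comp_mul_sq {E : Type*} [NormedAddCommGroup E] {g : ℝ → E} {c : ℝ}
    (hc : 0 < c) (hg : IntegrableOn (fun b => g (b ^ 2)) (Ioi 0)) :
    IntegrableOn (fun b => g (c * b ^ 2)) (Ioi 0) := by
  have h := (integrableOn_Ioi_comp_mul_left_iff (fun b => g (b ^ 2)) 0
    (Real.sqrt_pos.2 hc)).2 (by rwa [mul_zero])
  simpa only [mul_pow, Real.sq_sqrt hc.le] using h

theorem integral_Ioi_comp_mul_sq {E : Type*} [NormedAddCommGroup E] [NormedSpace ℝ E]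
    (g : ℝ → E) {c : ℝ} (hc : 0 < c) :
    ∫ b in Ioi (0 : ℝ), g (c * b ^ 2) = (√c)⁻¹ • ∫ b in Ioi (0 : ℝ), g (b ^ 2) := by
  have h := integral_comp_mul_left_Ioi (fun b => g (b ^ 2)) 0 (Real.sqrt_pos.2 hc)
  simpa only [mul_pow, Real.sq_sqrt hc.le, mul_zero] using h

theorem hasDerivAt_sqrt_pow_three_add_self {ψ : ℝ} (hψ : 0 < ψ) :
    HasDerivAt (fun ψ : ℝ => √(ψ ^ 3 + ψ)) ((3 * ψ ^ 2 + 1) / (2 * √(ψ ^ 3 + ψ))) ψ := by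
  refine (((hasDerivAt_pow 3 ψ).fun_add (hasDerivAt_id' ψ)).sqrt (by positivity)).congr_deriv ?_
  ring

theorem injOn_sqrt_pow_three_add_self : InjOn (fun ψ : ℝ => √(ψ ^ 3 + ψ)) (Ioi 0) := by
  intro s (hs : 0 < s) t (ht : 0 < t) hst
  exact strictMono_pow_three_add_self.injective <|
    (Real.sqrt_inj (by positivity) (by positivity)).1 hst

theorem image_sqrt_pow_three_add_self_Ioi :
    (fun ψ : ℝ => √(ψ ^ 3 + ψ)) '' Ioi 0 = Ioi 0 := by
  ext b
  constructor
  · rintro ⟨ψ, hψ : 0 < ψ, rfl⟩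
    exact Real.sqrt_pos.2 (by positivity)
  · intro (hb : 0 < b)
    have hcube : Psi1 (-b ^ 2) ^ 3 + Psi1 (-b ^ 2) = b ^ 2 := by
      rw [Psi1_pow_three_add_self, neg_neg]
    refine ⟨Psi1 (-b ^ 2), ?_, ?_⟩
    · exact strictMono_pow_three_add_self.lt_iff_lt.1 (by norm_num [hcube]; positivity)
    · simp only [hcube, Real.sqrt_sq hb.le]

-- The exponents are those of `integral_rpow_mul_one_add_sq_rpow` at `a = b = 1/4`.
theorem sqrt_pow_three_add_self_inv {ψ : ℝ} (hψ : 0 < ψ) :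
    (√(ψ ^ 3 + ψ))⁻¹ = ψ ^ (2 * (1 / 4 : ℝ) - 1) * (1 + ψ ^ 2) ^ (-(1 / 4 + 1 / 4 : ℝ)) := by
  rw [show ψ ^ 3 + ψ = ψ * (1 + ψ ^ 2) by ring, Real.sqrt_mul hψ.le, mul_inv,
    Real.sqrt_eq_rpow, Real.sqrt_eq_rpow, ← Real.rpow_neg hψ.le, ← Real.rpow_neg (by positivity)]
  norm_num

theorem abs_mul_Psi1_neg_sq_sqrt_pow_three_add_self {ψ : ℝ} (hψ : 0 < ψ) :
    |(3 * ψ ^ 2 + 1) / (2 * √(ψ ^ 3 + ψ))| * (1 / (1 + 3 * Psi1 (-√(ψ ^ 3 + ψ) ^ 2) ^ 2)) =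
      2⁻¹ * (ψ ^ (2 * (1 / 4 : ℝ) - 1) * (1 + ψ ^ 2) ^ (-(1 / 4 + 1 / 4 : ℝ))) := by
  rw [← sqrt_pow_three_add_self_inv hψ, Real.sq_sqrt (by positivity), Psi1_neg_pow_three_add_self,
    abs_of_pos (by positivity)]
  have : 0 < √(ψ ^ 3 + ψ) := Real.sqrt_pos.2 (by positivity)
  field_simp
  ring

theorem integrableOn_Psi1_neg_sq :
    IntegrableOn (fun b : ℝ => 1 / (1 + 3 * Psi1 (-b ^ 2) ^ 2)) (Ioi 0) := by
  rw [← image_sqrt_pow_three_add_self_Ioi, integrableOn_image_iff_integrableOn_abs_deriv_smul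
    measurableSet_Ioi (fun ψ hψ => (hasDerivAt_sqrt_pow_three_add_self hψ).hasDerivWithinAt)
    injOn_sqrt_pow_three_add_self]
  have h := integrableOn_rpow_mul_one_add_sq_rpow (a := 1 / 4) (b := 1 / 4) (by norm_num)
    (by norm_num)
  refine IntegrableOn.congr_fun (h.const_mul 2⁻¹) (fun ψ hψ => ?_) measurableSet_Ioi
  rw [smul_eq_mul, abs_mul_Psi1_neg_sq_sqrt_pow_three_add_self hψ]

theorem integral_Psi1_neg_sq :
    ∫ b in Ioi (0 : ℝ), 1 / (1 + 3 * Psi1 (-b ^ 2) ^ 2) = Real.Gamma (1 / 4) ^ 2 / (4 * √π) := by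
  rw [← image_sqrt_pow_three_add_self_Ioi, integral_image_eq_integral_abs_deriv_smul
    measurableSet_Ioi (fun ψ hψ => (hasDerivAt_sqrt_pow_three_add_self hψ).hasDerivWithinAt)
    injOn_sqrt_pow_three_add_self]
  simp only [smul_eq_mul]
  rw [setIntegral_congr_fun measurableSet_Ioi
      fun ψ hψ => abs_mul_Psi1_neg_sq_sqrt_pow_three_add_self hψ,
    integral_const_mul, integral_rpow_mul_one_add_sq_rpow (by norm_num) (by norm_num)]
  norm_num [Real.Gamma_one_half_eq]
  ring

theorem sqrt_pStar : √pStar = 2 * Real.Gamma (1 / 4) ^ 2 / (3 * π * √π) := by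
  have hΓ : 0 < Real.Gamma (1 / 4) := Real.Gamma_pos_of_pos (by norm_num)
  rw [← Real.sqrt_sq (by positivity : 0 ≤ 2 * Real.Gamma (1 / 4) ^ 2 / (3 * π * √π))]
  congr 1
  rw [pStar, div_pow, mul_pow, mul_pow, Real.sq_sqrt pi_pos.le]
  ring

/-- `𝒴*(0) = 3π/8`: the integral `∫₀^∞ db / (1 + 3Ψ₁(-p*·b²)²)` converges and
equals `3π/8`. -/
theorem Ystar_zero :
    IntegrableOn (fun b : ℝ => 1 / (1 + 3 * (Psi1 (pStar * (0 - b ^ 2))) ^ 2))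
      (Set.Ioi (0 : ℝ)) ∧
    Ystar 0 = 3 * π / 8 := by
  have hp : 0 < pStar := by unfold pStar; positivity
  set g : ℝ → ℝ := fun y => 1 / (1 + 3 * Psi1 (-y) ^ 2)
  have hg : (fun b : ℝ => 1 / (1 + 3 * (Psi1 (pStar * (0 - b ^ 2))) ^ 2)) =
      fun b => g (pStar * b ^ 2) := by
    simp only [g, zero_sub, mul_neg]
  refine ⟨hg ▸ integrableOn_Ioi_comp_mul_sq hp integrableOn_Psi1_neg_sq, ?_⟩
  rw [Ystar, hg, integral_Ioi_comp_mul_sq g hp, smul_eq_mul, integral_Psi1_neg_sq, sqrt_pStar]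
  have hΓ : 0 < Real.Gamma (1 / 4) := Real.Gamma_pos_of_pos (by norm_num)
  field_simp
  ring
end
end

section
/- Let α, β ∈ ℝ, let Ω ⊆ ℝ² be open, and let Θ, Υ : Ω → ℝ be twice continuously differentiable functions satisfying, at every (X,Y) ∈ Ω, the self-similar stationary system (1−α)·Θ + (α·X + Θ)·∂_XΘ + (β·Y + Υ)·∂_YΘ = 0 and ∂_XΘ + ∂_YΥ = 0, with ∂_YΘ ≠ 0 on Ω. Suppose Ω'' ⊆ ℝ² is open and h : Ω'' → ℝ is continuously differentiable such that (X,q) ↦ (X, h(X,q)) is a two-sided inverse of (X,Y) ↦ (X, Θ(X,Y)) between Ω'' and Ω (i.e. Θ(X, h(X,q)) = q on Ω'' and h(X, Θ(X,Y)) = Y on Ω). Define τ(X,q) := ∂_YΘ(X, h(X,q)). Then on Ω'' one has (α−1)·q·∂_q τ + (α·X + q)·∂_X τ = (α−1−β)·τ. -/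
/-!
Differentiating `τ (X, q) = ∂_YΘ (X, h (X, q))` by the chain rule and the identity
`Θ (X, h (X, q)) = q` implicitly (`h_q = 1 / Θ_Y`, `h_X = -Θ_X / Θ_Y`) expresses `τ_q` and `τ_X`
through `Θ_X, Θ_Y, Θ_XY, Θ_YY`. Differentiating the first equation in `Y` and using
`∂_YΥ = -∂_XΘ` gives `(1 - α + β) Θ_Y + (αX + Θ) Θ_XY + (βY + Υ) Θ_YY = 0`; eliminating
`βY + Υ` with the first equation itself and multiplying the claim by `Θ_Y ≠ 0` closes it.
-/

open Filter Topology

section SecondDerivative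

variable {𝕜 E F : Type*} [NontriviallyNormedField 𝕜] [NormedAddCommGroup E] [NormedSpace 𝕜 E]
  [NormedAddCommGroup F] [NormedSpace 𝕜 F] {f : E → F} {x : E}

theorem fderiv_fderiv_apply_const (hf : DifferentiableAt 𝕜 (fderiv 𝕜 f) x) (u v : E) :
    fderiv 𝕜 (fun y ↦ fderiv 𝕜 f y u) x v = fderiv 𝕜 (fderiv 𝕜 f) x v u := by
  simp [fderiv_clm_apply hf (differentiableAt_const u)]

theorem ContDiffAt.differentiableAt_fderiv (hf : ContDiffAt 𝕜 2 f x) :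
    DifferentiableAt 𝕜 (fderiv 𝕜 f) x :=
  (hf.fderiv_right (m := 1) (by norm_num)).differentiableAt one_ne_zero

theorem ContDiffAt.differentiableAt_fderiv_apply (hf : ContDiffAt 𝕜 2 f x) (u : E) :
    DifferentiableAt 𝕜 (fun y ↦ fderiv 𝕜 f y u) x :=
  hf.differentiableAt_fderiv.clm_apply (differentiableAt_const u)

theorem ContDiffAt.fderiv_fderiv_apply_comm [IsRCLikeNormedField 𝕜]
    (hf : ContDiffAt 𝕜 2 f x) (u v : E) :
    fderiv 𝕜 (fun y ↦ fderiv 𝕜 f y u) x v = fderiv 𝕜 (fun y ↦ fderiv 𝕜 f y v) x u := by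
  rw [fderiv_fderiv_apply_const hf.differentiableAt_fderiv,
    fderiv_fderiv_apply_const hf.differentiableAt_fderiv,
    (hf.isSymmSndFDerivAt (by simp)).eq]

end SecondDerivative

section Graph

variable {F : Type*} [NormedAddCommGroup F] [NormedSpace ℝ F]

theorem ContinuousLinearMap.apply_pair (L : ℝ × ℝ →L[ℝ] F) (a b : ℝ) :
    L (a, b) = a • L (1, 0) + b • L (0, 1) := by
  rw [← map_smul, ← map_smul, ← map_add]
  simp

theorem fderiv_comp_graph_apply {f : ℝ × ℝ → F} {h : ℝ × ℝ → ℝ} {w : ℝ × ℝ}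
    (hf : DifferentiableAt ℝ f (w.1, h w)) (hh : DifferentiableAt ℝ h w) (v : ℝ × ℝ) :
    fderiv ℝ (fun x ↦ f (x.1, h x)) w v
      = v.1 • fderiv ℝ f (w.1, h w) (1, 0) + fderiv ℝ h w v • fderiv ℝ f (w.1, h w) (0, 1) := by
  have hgraph : HasFDerivAt (fun x : ℝ × ℝ ↦ (x.1, h x))
      ((ContinuousLinearMap.fst ℝ ℝ ℝ).prod (fderiv ℝ h w)) w :=
    hasFDerivAt_fst.prodMk hh.hasFDerivAt
  have hcomp : HasFDerivAt (fun x ↦ f (x.1, h x)) _ w := hf.hasFDerivAt.comp w hgraph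
  rw [hcomp.fderiv]
  exact (fderiv ℝ f (w.1, h w)).apply_pair _ _

theorem fderiv_apply_graph_of_eventuallyEq_snd {Θ h : ℝ × ℝ → ℝ} {w : ℝ × ℝ}
    (hΘ : DifferentiableAt ℝ Θ (w.1, h w)) (hh : DifferentiableAt ℝ h w)
    (hinv : (fun x ↦ Θ (x.1, h x)) =ᶠ[𝓝 w] Prod.snd) (v : ℝ × ℝ) :
    v.1 * fderiv ℝ Θ (w.1, h w) (1, 0) + fderiv ℝ h w v * fderiv ℝ Θ (w.1, h w) (0, 1) = v.2 := by
  have := fderiv_comp_graph_apply hΘ hh v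
  rw [hinv.fderiv_eq, fderiv_snd] at this
  simpa using this.symm

end Graph

theorem fderiv_selfSimilar_apply {α β : ℝ} {Θ Υ : ℝ × ℝ → ℝ} {p : ℝ × ℝ}
    (hΘ : ContDiffAt ℝ 2 Θ p) (hΥ : DifferentiableAt ℝ Υ p)
    (heq : (fun x ↦ (1 - α) * Θ x + (α * x.1 + Θ x) * fderiv ℝ Θ x (1, 0)
        + (β * x.2 + Υ x) * fderiv ℝ Θ x (0, 1)) =ᶠ[𝓝 p] 0) (v : ℝ × ℝ) :
    (1 - α) * fderiv ℝ Θ p v + (α * v.1 + fderiv ℝ Θ p v) * fderiv ℝ Θ p (1, 0)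
      + (α * p.1 + Θ p) * fderiv ℝ (fun x ↦ fderiv ℝ Θ x (1, 0)) p v
      + (β * v.2 + fderiv ℝ Υ p v) * fderiv ℝ Θ p (0, 1)
      + (β * p.2 + Υ p) * fderiv ℝ (fun x ↦ fderiv ℝ Θ x (0, 1)) p v = 0 := by
  have HΘ := (hΘ.differentiableAt two_ne_zero).hasFDerivAt
  have HX := (hΘ.differentiableAt_fderiv_apply (1, 0)).hasFDerivAt
  have HY := (hΘ.differentiableAt_fderiv_apply (0, 1)).hasFDerivAt
  have H := ((HΘ.const_mul (1 - α)).add (((hasFDerivAt_fst.const_mul α).add HΘ).mul HX)).add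
    (((hasFDerivAt_snd.const_mul β).add hΥ.hasFDerivAt).mul HY)
  have hzero := congrArg (· v) (H.fderiv.symm.trans (heq.fderiv_eq.trans (fderiv_const_apply 0)))
  simp only [add_apply, smul_apply, smul_eq_mul,
    ContinuousLinearMap.coe_fst', ContinuousLinearMap.coe_snd', zero_apply,
    Pi.add_apply] at hzero
  linear_combination hzero

theorem crocco_transform_general (α β : ℝ) (Ω : Set (ℝ × ℝ)) (hΩ : IsOpen Ω)
    (Θ Υ : ℝ × ℝ → ℝ)
    (hΘ : ContDiffOn ℝ 2 Θ Ω) (hΥ : ContDiffOn ℝ 2 Υ Ω)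
    (heq1 : ∀ p ∈ Ω,
      (1 - α) * Θ p + (α * p.1 + Θ p) * fderiv ℝ Θ p (1, 0)
        + (β * p.2 + Υ p) * fderiv ℝ Θ p (0, 1) = 0)
    (heq2 : ∀ p ∈ Ω, fderiv ℝ Θ p (1, 0) + fderiv ℝ Υ p (0, 1) = 0)
    (hne : ∀ p ∈ Ω, fderiv ℝ Θ p (0, 1) ≠ 0)
    (Ω'' : Set (ℝ × ℝ)) (hΩ'' : IsOpen Ω'')
    (h : ℝ × ℝ → ℝ) (hh : ContDiffOn ℝ 1 h Ω'')
    (hmem : ∀ w ∈ Ω'', (w.1, h w) ∈ Ω)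
    (hright : ∀ w ∈ Ω'', Θ (w.1, h w) = w.2)
    (τ : ℝ × ℝ → ℝ)
    (hτ : ∀ w, τ w = fderiv ℝ Θ (w.1, h w) (0, 1)) :
    ∀ w ∈ Ω'',
      (α - 1) * w.2 * fderiv ℝ τ w (0, 1) + (α * w.1 + w.2) * fderiv ℝ τ w (1, 0)
        = (α - 1 - β) * τ w := by
  intro w hw
  have hp := hmem w hw
  have hΘp : ContDiffAt ℝ 2 Θ (w.1, h w) := hΘ.contDiffAt (hΩ.mem_nhds hp)
  have hΥp : DifferentiableAt ℝ Υ (w.1, h w) :=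
    (hΥ.contDiffAt (hΩ.mem_nhds hp)).differentiableAt two_ne_zero
  have hhw : DifferentiableAt ℝ h w :=
    (hh.contDiffAt (hΩ''.mem_nhds hw)).differentiableAt one_ne_zero
  have hinv : (fun x ↦ Θ (x.1, h x)) =ᶠ[𝓝 w] Prod.snd :=
    eventually_of_mem (hΩ''.mem_nhds hw) hright
  have hΘ_Y_diff := hΘp.differentiableAt_fderiv_apply (0, 1)
  have hh_q := fderiv_apply_graph_of_eventuallyEq_snd (hΘp.differentiableAt two_ne_zero) hhw hinv
  have hh_X := hh_q (1, 0)
  specialize hh_q (0, 1)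
  have hY := fderiv_selfSimilar_apply hΘp hΥp
    (eventually_of_mem (hΩ.mem_nhds hp) heq1) (0, 1)
  rw [hΘp.fderiv_fderiv_apply_comm] at hY
  have hmom := heq1 _ hp
  rw [hright w hw] at hY hmom
  rw [funext hτ, fderiv_comp_graph_apply hΘ_Y_diff hhw, fderiv_comp_graph_apply hΘ_Y_diff hhw]
  simp only [smul_eq_mul, zero_mul, one_mul, zero_add, mul_zero, mul_one] at hh_q hh_X hY ⊢
  set Θ_Y := fderiv ℝ Θ (w.1, h w) (0, 1)
  set Θ_YY := fderiv ℝ (fun x ↦ fderiv ℝ Θ x (0, 1)) (w.1, h w) (0, 1)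
  apply mul_left_cancel₀ (hne _ hp)
  linear_combination (α - 1) * w.2 * Θ_YY * hh_q + (α * w.1 + w.2) * Θ_YY * hh_X
    - Θ_YY * hmom + Θ_Y * hY - Θ_Y ^ 2 * heq2 _ hp

/-- Crocco-type transformation of the self-similar profile equation: if `(Θ, Υ)` is a
`C²` solution of the self-similar stationary system on an open set `Ω` with
`∂_Y Θ ≠ 0`, and `(X,q) ↦ (X, h(X,q))` is a `C¹` two-sided inverse of
`(X,Y) ↦ (X, Θ(X,Y))` between `Ω''` and `Ω`, then `τ(X,q) := ∂_Y Θ(X, h(X,q))`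
satisfies `(α-1)q ∂_q τ + (αX + q) ∂_X τ = (α-1-β) τ` on `Ω''`. -/
theorem crocco_transform (α β : ℝ) (Ω : Set (ℝ × ℝ)) (hΩ : IsOpen Ω)
    (Θ Υ : ℝ × ℝ → ℝ)
    (hΘ : ContDiffOn ℝ 2 Θ Ω) (hΥ : ContDiffOn ℝ 2 Υ Ω)
    (heq1 : ∀ p ∈ Ω,
      (1 - α) * Θ p + (α * p.1 + Θ p) * fderiv ℝ Θ p (1, 0)
        + (β * p.2 + Υ p) * fderiv ℝ Θ p (0, 1) = 0)
    (heq2 : ∀ p ∈ Ω, fderiv ℝ Θ p (1, 0) + fderiv ℝ Υ p (0, 1) = 0)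
    (hne : ∀ p ∈ Ω, fderiv ℝ Θ p (0, 1) ≠ 0)
    (Ω'' : Set (ℝ × ℝ)) (hΩ'' : IsOpen Ω'')
    (h : ℝ × ℝ → ℝ) (hh : ContDiffOn ℝ 1 h Ω'')
    (hmem : ∀ w ∈ Ω'', (w.1, h w) ∈ Ω)
    (hright : ∀ w ∈ Ω'', Θ (w.1, h w) = w.2)
    (hmem' : ∀ p ∈ Ω, (p.1, Θ p) ∈ Ω'')
    (hleft : ∀ p ∈ Ω, h (p.1, Θ p) = p.2)
    (τ : ℝ × ℝ → ℝ)
    (hτ : ∀ w, τ w = fderiv ℝ Θ (w.1, h w) (0, 1)) :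
    ∀ w ∈ Ω'',
      (α - 1) * w.2 * fderiv ℝ τ w (0, 1) + (α * w.1 + w.2) * fderiv ℝ τ w (1, 0)
        = (α - 1 - β) * τ w :=
  crocco_transform_general α β Ω hΩ Θ Υ hΘ hΥ heq1 heq2 hne Ω'' hΩ'' h hh hmem hright τ hτ
end

section
/- For all (a,b) ∈ ℝ² one has the symmetries Φ′₁(−a,b) = −Φ′₁(a,b) and Φ′₂(−a,b) = Φ′₂(a,b), as well as Φ′₁(a,−b) = Φ′₁(a,b) and Φ′₂(a,b) + Φ′₂(a,−b) = 2·𝒴′*(Φ′₁(a,b)). -/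
/-!
`Ψ₁` is odd, so the integrand of `Φ′₂` and `𝒴′*` is even in `X`; it is also even in the
integration variable and dominated by `1/(1+t²)`, so reflecting `∫_{-∞}^{-b/2}` to
`∫_{b/2}^{∞}` turns `Φ′₂(a,b) + Φ′₂(a,-b)` into twice the integral over the whole line.
-/

noncomputable section

open Real MeasureTheory

/-- The degenerate map
`Φ′(a,b) = (a + a³ + b²a/4, 2∫_{-∞}^{b/2} db̃/((1+b̃²)(1 + 3Ψ₁((a+a³+b²a/4)/(1+b̃²)^{3/2})²)))`. -/
def Phi' (p : ℝ × ℝ) : ℝ × ℝ :=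
  (p.1 + p.1 ^ 3 + p.2 ^ 2 * p.1 / 4,
    2 * ∫ t in Set.Iio (p.2 / 2),
      1 / ((1 + t ^ 2) *
        (1 + 3 * (Psi1 ((p.1 + p.1 ^ 3 + p.2 ^ 2 * p.1 / 4) /
          (1 + t ^ 2) ^ ((3 : ℝ) / 2))) ^ 2)))

/-- The degenerate displacement curve
`𝒴′*(X) = ∫_{-∞}^∞ db/((1+b²)(1 + 3Ψ₁(X/(1+b²)^{3/2})²))`. -/
def Ystar' (X : ℝ) : ℝ :=
  ∫ b : ℝ, 1 / ((1 + b ^ 2) * (1 + 3 * (Psi1 (X / (1 + b ^ 2) ^ ((3 : ℝ) / 2))) ^ 2))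

open Set

theorem integral_Iio_add_integral_Iio_neg_of_even {E : Type*} [NormedAddCommGroup E]
    [NormedSpace ℝ E] [CompleteSpace E] {f : ℝ → E} (hf : Integrable f)
    (heven : ∀ t, f (-t) = f t) (c : ℝ) :
    (∫ t in Iio c, f t) + ∫ t in Iio (-c), f t = ∫ t, f t := by
  have hreflect : ∫ t in Iio (-c), f t = ∫ t in Ioi c, f t := by
    rw [← integral_Iic_eq_integral_Iio, ← integral_comp_neg_Ioi]
    simp only [heven]
  rw [hreflect, ← integral_Iic_eq_integral_Iio]
  exact intervalIntegral.integral_Iic_add_Ioi hf.integrableOn hf.integrableOn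

theorem Real.sign_monotone : Monotone Real.sign := by
  intro x y hxy
  rcases lt_trichotomy x 0 with hx | rfl | hx <;> rcases lt_trichotomy y 0 with hy | rfl | hy <;>
    simp [Real.sign_of_neg, Real.sign_of_pos, *] <;> linarith

@[fun_prop]
theorem measurable_cbrt : Measurable cbrt :=
  Real.sign_monotone.measurable.mul
    ((Real.continuous_rpow_const (by norm_num)).measurable.comp measurable_abs)

theorem cbrt_neg (x : ℝ) : cbrt (-x) = -cbrt x := by
  simp only [cbrt, Real.sign_neg, abs_neg, neg_mul]

@[fun_prop]
theorem measurable_Psi1 : Measurable Psi1 := by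
  unfold Psi1; fun_prop

theorem Psi1_neg (X : ℝ) : Psi1 (-X) = -Psi1 X := by
  rw [Psi1, Psi1, neg_sq]
  set s := √(1 / 27 + X ^ 2 / 4)
  rw [show -(-X) / 2 + s = -(-X / 2 - s) by ring, show -(-X) / 2 - s = -(-X / 2 + s) by ring,
    cbrt_neg, cbrt_neg, add_comm, neg_add]

def ystarIntegrand (X t : ℝ) : ℝ :=
  1 / ((1 + t ^ 2) * (1 + 3 * (Psi1 (X / (1 + t ^ 2) ^ ((3 : ℝ) / 2))) ^ 2))

theorem ystarIntegrand_neg_left (X t : ℝ) : ystarIntegrand (-X) t = ystarIntegrand X t := by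
  simp only [ystarIntegrand, neg_div, Psi1_neg, neg_sq]

theorem ystarIntegrand_neg_right (X t : ℝ) : ystarIntegrand X (-t) = ystarIntegrand X t := by
  simp only [ystarIntegrand, neg_sq]

theorem abs_ystarIntegrand_le (X t : ℝ) : |ystarIntegrand X t| ≤ (1 + t ^ 2)⁻¹ := by
  have hle : 1 + t ^ 2 ≤ (1 + t ^ 2) * (1 + 3 * Psi1 (X / (1 + t ^ 2) ^ ((3 : ℝ) / 2)) ^ 2) :=
    le_mul_of_one_le_right (by positivity) (le_add_of_nonneg_right (by positivity))
  rw [ystarIntegrand, abs_of_nonneg (by positivity), one_div]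
  exact inv_anti₀ (by positivity) hle

theorem integrable_ystarIntegrand (X : ℝ) : Integrable (ystarIntegrand X) := by
  have hmeas : Measurable (ystarIntegrand X) := by
    unfold ystarIntegrand; fun_prop
  refine integrable_inv_one_add_sq.mono hmeas.aestronglyMeasurable (.of_forall fun t => ?_)
  rw [Real.norm_eq_abs, Real.norm_of_nonneg (by positivity)]
  exact abs_ystarIntegrand_le X t

theorem Phi'_snd (a b : ℝ) :
    (Phi' (a, b)).2 = 2 * ∫ t in Iio (b / 2), ystarIntegrand (Phi' (a, b)).1 t := rfl

theorem Ystar'_eq_integral (X : ℝ) : Ystar' X = ∫ t, ystarIntegrand X t := rfl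

theorem Phi'_fst_neg_left (a b : ℝ) : (Phi' (-a, b)).1 = -(Phi' (a, b)).1 := by
  simp only [Phi']
  ring

theorem Phi'_fst_neg_right (a b : ℝ) : (Phi' (a, -b)).1 = (Phi' (a, b)).1 := by
  simp only [Phi']
  ring

theorem Phi'_snd_neg_left (a b : ℝ) : (Phi' (-a, b)).2 = (Phi' (a, b)).2 := by
  simp only [Phi'_snd, Phi'_fst_neg_left, ystarIntegrand_neg_left]

theorem Phi'_snd_add_snd_neg_right (a b : ℝ) :
    (Phi' (a, b)).2 + (Phi' (a, -b)).2 = 2 * Ystar' (Phi' (a, b)).1 := by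
  rw [Phi'_snd, Phi'_snd, Phi'_fst_neg_right, ← mul_add, neg_div,
    integral_Iio_add_integral_Iio_neg_of_even (integrable_ystarIntegrand _)
      (ystarIntegrand_neg_right _), Ystar'_eq_integral]

/-- The symmetries of `Φ′`: `Φ′₁` is odd in `a`, `Φ′₂` even in `a`, `Φ′₁` even in `b`,
and `Φ′₂(a,b) + Φ′₂(a,-b) = 2𝒴′*(Φ′₁(a,b))`. -/
theorem Phi'_symmetry :
    ∀ a b : ℝ,
      (Phi' (-a, b)).1 = -(Phi' (a, b)).1 ∧
      (Phi' (-a, b)).2 = (Phi' (a, b)).2 ∧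
      (Phi' (a, -b)).1 = (Phi' (a, b)).1 ∧
      (Phi' (a, b)).2 + (Phi' (a, -b)).2 = 2 * Ystar' ((Phi' (a, b)).1) := fun a b =>
  ⟨Phi'_fst_neg_left a b, Phi'_snd_neg_left a b, Phi'_fst_neg_right a b,
    Phi'_snd_add_snd_neg_right a b⟩
end
end
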